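/- Let Ω ⊆ ℝ² be open, v ∈ C^∞(Ω), p ∈ (1,∞), β > −1, and let x ∈ Ω be a point with Dv(x) ≠ 0 at which |Dv(x)|² Δv(x) + (p − 2) Δ∞v(x) = 0 (the p-Laplace equation in nondivergence form). Let G(y) = |Dv(y)|^{β} Dv(y), which is C¹ on a neighborhood of x. Then −det DG(x) = (1/(β+1)) |D(|Dv|^{β+1})(x)|² + (β+1)(p−2) |Dv(x)|^{2β} (Δ∞v(x))² / |Dv(x)|⁴. -/

import Mathlib

open Real MeasureTheory
open scoped RealInnerProductSpace

noncomputable section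

/-- The Euclidean plane ℝ². -/
abbrev E2 : Type := EuclideanSpace ℝ (Fin 2)

/-- Standard basis vector. -/
def ee (i : Fin 2) : E2 := EuclideanSpace.single i (1 : ℝ)

/-- Partial derivative ∂ᵢf. -/
def pd (i : Fin 2) (f : E2 → ℝ) (x : E2) : ℝ := fderiv ℝ f x (ee i)

/-- Second partial derivative ∂ᵢ∂ⱼf. -/
def pd2 (i j : Fin 2) (f : E2 → ℝ) (x : E2) : ℝ := pd i (pd j f) x

/-- |Df|², squared Euclidean norm of the gradient. -/
def gradSq (f : E2 → ℝ) (x : E2) : ℝ := (pd 0 f x) ^ 2 + (pd 1 f x) ^ 2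

/-- |Df|, Euclidean norm of the gradient. -/
def gradNorm (f : E2 → ℝ) (x : E2) : ℝ := Real.sqrt (gradSq f x)

/-- Laplacian Δf = tr D²f. -/
def lap (f : E2 → ℝ) (x : E2) : ℝ := pd2 0 0 f x + pd2 1 1 f x

/-- ∞-Laplacian Δ∞f = D²f Df · Df. -/
def infLap (f : E2 → ℝ) (x : E2) : ℝ :=
  pd2 0 0 f x * pd 0 f x * pd 0 f x + pd2 0 1 f x * pd 0 f x * pd 1 f x +
  pd2 1 0 f x * pd 1 f x * pd 0 f x + pd2 1 1 f x * pd 1 f x * pd 1 f x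

/-- |D²f|², squared Frobenius norm of the Hessian. -/
def hessFrobSq (f : E2 → ℝ) (x : E2) : ℝ :=
  (pd2 0 0 f x) ^ 2 + (pd2 0 1 f x) ^ 2 + (pd2 1 0 f x) ^ 2 + (pd2 1 1 f x) ^ 2

/-- det D²f, determinant of the Hessian. -/
def detHess (f : E2 → ℝ) (x : E2) : ℝ :=
  pd2 0 0 f x * pd2 1 1 f x - pd2 0 1 f x * pd2 1 0 f x

/-- |D²f Df|². -/
def hessGradSq (f : E2 → ℝ) (x : E2) : ℝ :=
  (pd2 0 0 f x * pd 0 f x + pd2 0 1 f x * pd 1 f x) ^ 2 +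
  (pd2 1 0 f x * pd 0 f x + pd2 1 1 f x * pd 1 f x) ^ 2

/-- Jacobian determinant of the planar map with components `F 0`, `F 1`. -/
def jdet (F : Fin 2 → E2 → ℝ) (x : E2) : ℝ :=
  pd 0 (F 0) x * pd 1 (F 1) x - pd 1 (F 0) x * pd 0 (F 1) x

/-- Squared Frobenius norm of the Jacobian of the planar map with components `F 0`, `F 1`. -/
def jFrobSq (F : Fin 2 → E2 → ℝ) (x : E2) : ℝ :=
  (pd 0 (F 0) x) ^ 2 + (pd 1 (F 0) x) ^ 2 + (pd 0 (F 1) x) ^ 2 + (pd 1 (F 1) x) ^ 2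

/-- Df · Dg. -/
def gradDot (f g : E2 → ℝ) (x : E2) : ℝ :=
  pd 0 f x * pd 0 g x + pd 1 f x * pd 1 g x

/-- D²ψ Dv · Dv. -/
def hessQuad (ψ v : E2 → ℝ) (x : E2) : ℝ :=
  pd2 0 0 ψ x * pd 0 v x * pd 0 v x + pd2 0 1 ψ x * pd 0 v x * pd 1 v x +
  pd2 1 0 ψ x * pd 1 v x * pd 0 v x + pd2 1 1 ψ x * pd 1 v x * pd 1 v x

/-- (D²v Dv) · Dψ. -/
def hessGradDot (v ψ : E2 → ℝ) (x : E2) : ℝ :=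
  (pd2 0 0 v x * pd 0 v x + pd2 0 1 v x * pd 1 v x) * pd 0 ψ x +
  (pd2 1 0 v x * pd 0 v x + pd2 1 1 v x * pd 1 v x) * pd 1 ψ x

/-- Smooth compactly supported test function on Ω. -/
def IsTestOn (ψ : E2 → ℝ) (Ω : Set E2) : Prop :=
  ContDiff ℝ (⊤ : ℕ∞) ψ ∧ HasCompactSupport ψ ∧ tsupport ψ ⊆ Ω

/-- Components of W = |Dv|⁻¹ Dv. -/
def Wcomp (v : E2 → ℝ) (i : Fin 2) : E2 → ℝ := fun y => (gradNorm v y)⁻¹ * pd i v y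

/-!
Write `q = |Dv|` and `H = D²v`. Then `DG = q^β (H + β q⁻² Dv ⊗ H Dv)`, whose determinant is
`(β + 1) q^{2β} det H` by the matrix determinant lemma and `H adj H = det H · I`, and
`D(q^{β+1}) = (β + 1) q^{β-1} H Dv`. In the plane, Cayley–Hamilton for the symmetric `H` gives
`|H Dv|² = Δv Δ∞v − q² det H`, and the equation turns `(p − 2) Δ∞v` into `−q² Δv`, so both sides
equal `−(β + 1) q^{2β} det H`.
-/

variable {f g v : E2 → ℝ} {x : E2}

lemma pd_mul (hf : DifferentiableAt ℝ f x) (hg : DifferentiableAt ℝ g x) (i : Fin 2) :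
    pd i (fun y => f y * g y) x = f x * pd i g x + g x * pd i f x := by
  simp [pd, fderiv_fun_mul hf hg]

lemma pd_add (hf : DifferentiableAt ℝ f x) (hg : DifferentiableAt ℝ g x) (i : Fin 2) :
    pd i (fun y => f y + g y) x = pd i f x + pd i g x := by
  simp [pd, fderiv_fun_add hf hg]

lemma pd_rpow_const (hf : DifferentiableAt ℝ f x) (hfx : f x ≠ 0) (r : ℝ) (i : Fin 2) :
    pd i (fun y => f y ^ r) x = r * f x ^ (r - 1) * pd i f x := by
  simp [pd, (hf.hasFDerivAt.rpow_const (Or.inl hfx)).fderiv, mul_assoc]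

lemma pd_sqrt (hf : DifferentiableAt ℝ f x) (hfx : f x ≠ 0) (i : Fin 2) :
    pd i (fun y => √(f y)) x = pd i f x / (2 * √(f x)) := by
  simp [pd, fderiv_sqrt hf hfx, div_eq_inv_mul]

lemma pd_sq (hf : DifferentiableAt ℝ f x) (i : Fin 2) :
    pd i (fun y => f y ^ 2) x = 2 * f x * pd i f x := by
  simp [pd, fderiv_fun_pow 2 hf]

lemma rpow_two_mul {a : ℝ} (ha : 0 ≤ a) (β : ℝ) : a ^ (2 * β) = (a ^ β) ^ 2 := by
  rw [mul_comm, ← Real.rpow_natCast, ← Real.rpow_mul ha, Nat.cast_ofNat]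

lemma gradSq_nonneg (v : E2 → ℝ) (x : E2) : 0 ≤ gradSq v x := by
  unfold gradSq; positivity

lemma gradNorm_sq (v : E2 → ℝ) (x : E2) : gradNorm v x ^ 2 = gradSq v x :=
  Real.sq_sqrt (gradSq_nonneg v x)

lemma gradNorm_pos (hgrad : gradSq v x ≠ 0) : 0 < gradNorm v x :=
  Real.sqrt_pos.mpr ((gradSq_nonneg v x).lt_of_ne' hgrad)

namespace ContDiffAt

lemma differentiableAt_fderiv (hv : ContDiffAt ℝ 2 v x) : DifferentiableAt ℝ (fderiv ℝ v) x :=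
  (hv.fderiv_right (m := 1) (by norm_num)).differentiableAt one_ne_zero

lemma differentiableAt_pd (hv : ContDiffAt ℝ 2 v x) (i : Fin 2) :
    DifferentiableAt ℝ (pd i v) x :=
  hv.differentiableAt_fderiv.clm_apply (differentiableAt_const (ee i))

lemma pd2_eq_fderiv_fderiv (hv : ContDiffAt ℝ 2 v x) (i j : Fin 2) :
    pd2 i j v x = fderiv ℝ (fderiv ℝ v) x (ee i) (ee j) := by
  show fderiv ℝ (fun y => fderiv ℝ v y (ee j)) x (ee i) = _
  simp [fderiv_clm_apply hv.differentiableAt_fderiv (differentiableAt_const (ee j))]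

lemma pd2_comm (hv : ContDiffAt ℝ 2 v x) : pd2 0 1 v x = pd2 1 0 v x := by
  rw [hv.pd2_eq_fderiv_fderiv, hv.pd2_eq_fderiv_fderiv]
  exact hv.isSymmSndFDerivAt (by simp) _ _

lemma differentiableAt_gradSq (hv : ContDiffAt ℝ 2 v x) : DifferentiableAt ℝ (gradSq v) x :=
  ((hv.differentiableAt_pd 0).pow 2).add ((hv.differentiableAt_pd 1).pow 2)

lemma differentiableAt_gradNorm (hv : ContDiffAt ℝ 2 v x) (hgrad : gradSq v x ≠ 0) :
    DifferentiableAt ℝ (gradNorm v) x :=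
  hv.differentiableAt_gradSq.sqrt hgrad

lemma pd_gradSq (hv : ContDiffAt ℝ 2 v x) (i : Fin 2) :
    pd i (gradSq v) x = 2 * (pd 0 v x * pd2 i 0 v x + pd 1 v x * pd2 i 1 v x) := by
  have h0 := hv.differentiableAt_pd 0
  have h1 := hv.differentiableAt_pd 1
  change pd i (fun y => pd 0 v y ^ 2 + pd 1 v y ^ 2) x = _
  rw [pd_add (f := fun y => pd 0 v y ^ 2) (g := fun y => pd 1 v y ^ 2) (h0.pow 2) (h1.pow 2),
    pd_sq h0, pd_sq h1, pd2, pd2]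
  ring

lemma pd_gradNorm (hv : ContDiffAt ℝ 2 v x) (hgrad : gradSq v x ≠ 0) (i : Fin 2) :
    pd i (gradNorm v) x = (pd 0 v x * pd2 i 0 v x + pd 1 v x * pd2 i 1 v x) / gradNorm v x := by
  change pd i (fun y => √(gradSq v y)) x = _
  rw [pd_sqrt hv.differentiableAt_gradSq hgrad, hv.pd_gradSq, ← gradNorm]
  field_simp

lemma pd_gradNorm_sq_add_sq (hv : ContDiffAt ℝ 2 v x) (hgrad : gradSq v x ≠ 0) :
    pd 0 (gradNorm v) x ^ 2 + pd 1 (gradNorm v) x ^ 2 = hessGradSq v x / gradSq v x := by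
  rw [hv.pd_gradNorm hgrad, hv.pd_gradNorm hgrad, div_pow, div_pow, gradNorm_sq, hessGradSq]
  ring

lemma jdet_gradNorm_rpow_mul_pd (hv : ContDiffAt ℝ 2 v x) (hgrad : gradSq v x ≠ 0) (β : ℝ) :
    jdet (fun i y => gradNorm v y ^ β * pd i v y) x
      = (β + 1) * gradNorm v x ^ (2 * β) * detHess v x := by
  have hq := (gradNorm_pos hgrad).ne'
  have hG : ∀ i j, pd j (fun y => gradNorm v y ^ β * pd i v y) x
      = gradNorm v x ^ β * pd2 j i v x
        + pd i v x * (β * (gradNorm v x ^ β / gradNorm v x) * pd j (gradNorm v) x) := by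
    intro i j
    have hdq := hv.differentiableAt_gradNorm hgrad
    rw [pd_mul (hdq.rpow_const (Or.inl hq)) (hv.differentiableAt_pd i), pd_rpow_const hdq hq,
      Real.rpow_sub_one hq, pd2]
  rw [jdet, hG, hG, hG, hG, hv.pd_gradNorm hgrad, hv.pd_gradNorm hgrad, detHess, ← hv.pd2_comm,
    rpow_two_mul (gradNorm_pos hgrad).le]
  have hq2 : gradNorm v x ^ 2 = pd 0 v x ^ 2 + pd 1 v x ^ 2 := gradNorm_sq v x
  field_simp
  linear_combination -(gradNorm v x ^ β) ^ 2 * gradNorm v x ^ 2 * β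
    * (pd2 0 0 v x * pd2 1 1 v x - pd2 0 1 v x ^ 2) * hq2

end ContDiffAt

lemma hessGradSq_eq_lap_mul_infLap_sub (hsymm : pd2 0 1 v x = pd2 1 0 v x) :
    hessGradSq v x = lap v x * infLap v x - detHess v x * gradSq v x := by
  simp only [hessGradSq, lap, infLap, detHess, gradSq, hsymm]
  ring

theorem stmt_11_general (Ω : Set E2) (hΩ : IsOpen Ω) (v : E2 → ℝ)
    (hv : ContDiffOn ℝ (⊤ : ℕ∞) v Ω) (p : ℝ) (β : ℝ) (hβ : -1 < β)
    (x : E2) (hx : x ∈ Ω) (hgrad : gradSq v x ≠ 0)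
    (hpl : gradSq v x * lap v x + (p - 2) * infLap v x = 0) :
    -jdet (fun i y => gradNorm v y ^ β * pd i v y) x
      = (1/(β+1)) * ((pd 0 (fun y => gradNorm v y ^ (β+1)) x) ^ 2
            + (pd 1 (fun y => gradNorm v y ^ (β+1)) x) ^ 2)
        + (β+1) * (p-2) * gradNorm v x ^ (2*β) * (infLap v x) ^ 2 / (gradSq v x) ^ 2 := by
  have hv2 : ContDiffAt ℝ 2 v x :=
    (hv.contDiffAt (hΩ.mem_nhds hx)).of_le (WithTop.coe_le_coe.mpr le_top)
  have hq := gradNorm_pos hgrad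
  have hβ1 : β + 1 ≠ 0 := by linarith
  have hDpow : ∀ i, pd i (fun y => gradNorm v y ^ (β + 1)) x
      = (β + 1) * gradNorm v x ^ β * pd i (gradNorm v) x := fun i => by
    rw [pd_rpow_const (hv2.differentiableAt_gradNorm hgrad) hq.ne', add_sub_cancel_right]
  have hDq : pd 0 (gradNorm v) x ^ 2 + pd 1 (gradNorm v) x ^ 2
      + (p - 2) * infLap v x ^ 2 / gradSq v x ^ 2 = -detHess v x := by
    rw [hv2.pd_gradNorm_sq_add_sq hgrad, hessGradSq_eq_lap_mul_infLap_sub hv2.pd2_comm]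
    field_simp
    linear_combination infLap v x * hpl
  rw [hv2.jdet_gradNorm_rpow_mul_pd hgrad, hDpow, hDpow, rpow_two_mul hq.le]
  calc _ = (β + 1) * (gradNorm v x ^ β) ^ 2 * -detHess v x := by ring
    _ = _ := by
      rw [← hDq]
      field_simp

/-- identity for −det DG where G = |Dv|^β Dv, at a point where the
p-Laplace equation holds in nondivergence form and Dv ≠ 0. -/
theorem stmt_11 (Ω : Set E2) (hΩ : IsOpen Ω) (v : E2 → ℝ)
    (hv : ContDiffOn ℝ (⊤ : ℕ∞) v Ω) (p : ℝ) (hp : 1 < p) (β : ℝ) (hβ : -1 < β)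
    (x : E2) (hx : x ∈ Ω) (hgrad : gradSq v x ≠ 0)
    (hpl : gradSq v x * lap v x + (p - 2) * infLap v x = 0) :
    -jdet (fun i y => gradNorm v y ^ β * pd i v y) x
      = (1/(β+1)) * ((pd 0 (fun y => gradNorm v y ^ (β+1)) x) ^ 2
            + (pd 1 (fun y => gradNorm v y ^ (β+1)) x) ^ 2)
        + (β+1) * (p-2) * gradNorm v x ^ (2*β) * (infLap v x) ^ 2 / (gradSq v x) ^ 2 :=
  stmt_11_general Ω hΩ v hv p β hβ x hx hgrad hpl
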